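/- arXiv:math/0106057 — 3 statements merged into one kernel-verified Lean document; each statement's English description precedes it below -/
import Mathlib

section
/- Let $\Delta$ be an irreducible crystallographic root system with highest root $\theta = \sum_i m_i \alpha_i$, and suppose $m_j = 1$ for a simple root $\alpha_j$. Let $w_0^j$ be the longest element of the parabolic subgroup of the Weyl group generated by the simple reflections $s_i$ with $i \neq j$. Then $w_0^j(\alpha_j) = \theta$ and $w_0^j(\theta) = \alpha_j$. -/
open scoped RealInnerProductSpace

/-!
Pair with `ρ` to measure heights. For `i ≠ j` the vector `w (α i)` has height `-1`, so splitting
`θ = α j + ∑_{i ≠ j} m i • α i` gives `ht (w θ) = ht (w (α j)) - (h - 2)`. Positive roots have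
height at least `1` and at most `h - 1`, so both bounds are attained: `w (α j)` has maximal height,
hence is `θ`, and `w θ` has height `1`, hence is a simple root `α k`. If `k ≠ j`, then
`θ = w⁻¹ (α k)` would be the negative of a simple root.
-/

section Height

variable {V ι : Type*} [NormedAddCommGroup V] [InnerProductSpace ℝ V] [Fintype ι]
  {α : ι → V} {ρ : V}

theorem inner_sum_natCast_smul (hρ : ∀ i, ⟪ρ, α i⟫ = 1) (c : ι → ℕ) :
    ⟪ρ, ∑ i, (c i : ℝ) • α i⟫ = ∑ i, (c i : ℝ) := by
  simp [inner_sum, real_inner_smul_right, hρ]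

theorem one_le_inner_of_eq_natCast_sum (hρ : ∀ i, ⟪ρ, α i⟫ = 1) {β : V} (hβ : β ≠ 0)
    {c : ι → ℕ} (hc : β = ∑ i, (c i : ℝ) • α i) : 1 ≤ ⟪ρ, β⟫ := by
  have hsum : ∑ i, c i ≠ 0 := by
    intro hzero
    refine hβ (hc ▸ Finset.sum_eq_zero fun i _ => ?_)
    simp [Finset.sum_eq_zero_iff.mp hzero i (Finset.mem_univ i)]
  rw [hc, inner_sum_natCast_smul hρ]
  exact_mod_cast Nat.one_le_iff_ne_zero.mpr hsum

theorem exists_eq_of_inner_eq_one [DecidableEq ι] (hρ : ∀ i, ⟪ρ, α i⟫ = 1) {β : V}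
    {c : ι → ℕ} (hc : β = ∑ i, (c i : ℝ) • α i) (h1 : ⟪ρ, β⟫ = 1) : ∃ k, β = α k := by
  rw [hc, inner_sum_natCast_smul hρ] at h1
  have hsum : ∑ i, c i = 1 := by exact_mod_cast h1
  obtain ⟨k, hk⟩ : ∃ k, c k ≠ 0 := by
    by_contra! hzero
    simp [hzero] at hsum
  rw [Fintype.sum_eq_add_sum_subtype_ne _ k] at hsum
  have hck : c k = 1 := by omega
  have hrest_sum : ∑ i : {i // i ≠ k}, c i = 0 := by omega
  have hrest : ∀ i : {i // i ≠ k}, c i = 0 :=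
    fun i => Finset.sum_eq_zero_iff.mp hrest_sum i (Finset.mem_univ i)
  refine ⟨k, ?_⟩
  rw [hc, Fintype.sum_eq_add_sum_subtype_ne _ k, hck]
  simp [hrest]

theorem inner_map_sum_natCast_smul [DecidableEq ι] (w : V →ₗ[ℝ] V)
    (j : ι) (hw : ∀ i ≠ j, ⟪ρ, w (α i)⟫ = -1) (c : ι → ℕ) :
    ⟪ρ, w (∑ i, (c i : ℝ) • α i)⟫ = c j * ⟪ρ, w (α j)⟫ - ∑ i : {i // i ≠ j}, (c i : ℝ) := by
  simp only [map_sum, map_smul, inner_sum, real_inner_smul_right]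
  rw [Fintype.sum_eq_add_sum_subtype_ne _ j, sub_eq_add_neg, ← Finset.sum_neg_distrib]
  congr 1
  exact Finset.sum_congr rfl fun i _ => by rw [hw i i.2]; ring

end Height

theorem parabolic_longest_element_highest_root_general {V : Type*} [NormedAddCommGroup V]
    [InnerProductSpace ℝ V] {n : ℕ}
    (α : Fin n → V) (θ ρ : V) (m : Fin n → ℕ) (h : ℕ) (j : Fin n)
    (Δp : Finset V) (w : V ≃ₗᵢ[ℝ] V) (σ : Equiv.Perm {i : Fin n // i ≠ j})
    (h0 : (0 : V) ∉ Δp)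
    (hposc : ∀ β ∈ Δp, ∃ c : Fin n → ℕ, β = ∑ i, (c i : ℝ) • α i)
    (hρ : ∀ i, ⟪ρ, α i⟫ = 1)
    (hθ : θ = ∑ i, (m i : ℝ) • α i) (hθΔ : θ ∈ Δp)
    (hmj : m j = 1)
    (hh : h = 1 + ∑ i, m i)
    (hmax : ∀ β ∈ Δp, ⟪ρ, β⟫ ≤ (h : ℝ) - 1)
    (huniq : ∀ β ∈ Δp, ⟪ρ, β⟫ = (h : ℝ) - 1 → β = θ)
    (hwj : ∀ i : {i : Fin n // i ≠ j}, w (α i) = - α (σ i))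
    (hwa : w (α j) ∈ Δp) (hwt : w θ ∈ Δp) :
    w (α j) = θ ∧ w θ = α j := by
  have one_le : ∀ β ∈ Δp, 1 ≤ ⟪ρ, β⟫ := fun β hβ =>
    have ⟨_, hc⟩ := hposc β hβ
    one_le_inner_of_eq_natCast_sum hρ (ne_of_mem_of_not_mem hβ h0) hc
  have hw : ∀ i ≠ j, ⟪ρ, w (α i)⟫ = -1 := fun i hi => by
    rw [hwj ⟨i, hi⟩, inner_neg_right, hρ]
  have hheight : ⟪ρ, w θ⟫ = ⟪ρ, w (α j)⟫ - (h - 2) := by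
    have hh' : (h : ℝ) = 2 + ∑ i : {i // i ≠ j}, (m i : ℝ) := by
      rw [hh, Fintype.sum_eq_add_sum_subtype_ne _ j, hmj]; push_cast; ring
    rw [hθ, hh']
    simpa [hmj] using inner_map_sum_natCast_smul w.toLinearEquiv.toLinearMap j hw m
  have hwt_le := one_le _ hwt
  have hwa_le := hmax _ hwa
  have hwα : w (α j) = θ := huniq _ hwa (by linarith)
  obtain ⟨c, hc⟩ := hposc _ hwt
  obtain ⟨k, hk⟩ := exists_eq_of_inner_eq_one hρ hc (by linarith)
  obtain rfl : k = j := by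
    by_contra hkj
    have hθ_neg : θ = -α (σ.symm ⟨k, hkj⟩) :=
      w.injective (by rw [map_neg, hwj, Equiv.apply_symm_apply, neg_neg, hk])
    have := one_le _ hθΔ
    rw [hθ_neg, inner_neg_right, hρ] at this
    linarith
  exact ⟨hwα, hk⟩

/-- Let `Δp` be the positive roots of an irreducible crystallographic root system with
simple roots `α i`, highest root `θ = ∑ m i • α i` (so `θ` is the unique root of maximal
height `h - 1`, heights being computed by pairing with `ρ̌`), and suppose `m j = 1`.
If `w = w₀ʲ` is the longest element of the parabolic subgroup generated by the simple
reflections `s i`, `i ≠ j` — so that `w` maps `{α i | i ≠ j}` onto `{-α i | i ≠ j}` and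
maps `α j` and `θ` to positive roots — then `w (α j) = θ` and `w θ = α j`. -/
theorem parabolic_longest_element_highest_root {V : Type*} [NormedAddCommGroup V]
    [InnerProductSpace ℝ V] {n : ℕ}
    (α : Fin n → V) (θ ρ : V) (m : Fin n → ℕ) (h : ℕ) (j : Fin n)
    (Δp : Finset V) (w : V ≃ₗᵢ[ℝ] V) (σ : Equiv.Perm {i : Fin n // i ≠ j})
    (h0 : (0 : V) ∉ Δp)
    (hα : ∀ i, α i ∈ Δp)
    (hposc : ∀ β ∈ Δp, ∃ c : Fin n → ℕ, β = ∑ i, (c i : ℝ) • α i)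
    (hind : LinearIndependent ℝ α)
    (hρ : ∀ i, ⟪ρ, α i⟫ = 1)
    (hθ : θ = ∑ i, (m i : ℝ) • α i) (hθΔ : θ ∈ Δp)
    (hmj : m j = 1) (hm : ∀ i, 0 < m i)
    (hh : h = 1 + ∑ i, m i)
    (hmax : ∀ β ∈ Δp, ⟪ρ, β⟫ ≤ (h : ℝ) - 1)
    (huniq : ∀ β ∈ Δp, ⟪ρ, β⟫ = (h : ℝ) - 1 → β = θ)
    (hwj : ∀ i : {i : Fin n // i ≠ j}, w (α i) = - α (σ i))
    (hwa : w (α j) ∈ Δp) (hwt : w θ ∈ Δp) :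
    w (α j) = θ ∧ w θ = α j :=
  parabolic_longest_element_highest_root_general α θ ρ m h j Δp w σ h0 hposc hρ hθ hθΔ hmj hh hmax
    huniq hwj hwa hwt
end

section
/- Let $X = \{x \in V \mid (x, \alpha_i) \leq 1 \text{ for all } i, \ (x,\theta) \geq -2\}$. Then $X$ is the simplex with vertices $\check\rho$ and $\check\rho - (h+1)\check\omega_i/m_i$ for $i = 1, \dots, n$, and $X = t_{\check\rho}\, w_0(\overline{C}_{h+1})$, where $t_{\check\rho}$ is translation by $\check\rho$, $w_0$ is the longest element of $W$, and $\overline{C}_{h+1} = \{x \in \overline{C}_\infty \mid (x,\theta) \leq h+1\}$. -/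
/-!
In the basis `ω` dual to the simple roots every `x` is `∑ ⟪α i, x⟫ • ω i`, so the dilated alcove
`C̄_c` is the simplex with vertices `0` and `(c / m i) • ω i`, the barycentric weight of the
`i`-th vertex being `m i * ⟪α i, x⟫ / c`. Since `⟪α i, ρ⟫ = 1` and `⟪θ, ρ⟫ = h - 1`, the point
reflection `x ↦ ρ - x` maps `C̄_{h+1}` onto `X`. Finally `-w₀` permutes the simple roots and fixes
`θ`, hence preserves `C̄_{h+1}`, so `ρ + w₀ C̄_{h+1} = ρ - C̄_{h+1} = X`.
-/

open scoped RealInnerProductSpace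

section Simplex

variable {𝕜 E ι : Type*} [Field 𝕜] [LinearOrder 𝕜] [IsStrictOrderedRing 𝕜]
  [AddCommGroup E] [Module 𝕜 E] [Fintype ι]

theorem sum_smul_mem_convexHull_insert_zero {s : Set E} {t : ι → 𝕜} {v : ι → E}
    (ht : ∀ i, 0 ≤ t i) (hsum : ∑ i, t i ≤ 1) (hv : ∀ i, v i ∈ s) :
    ∑ i, t i • v i ∈ convexHull 𝕜 (insert 0 s) := by
  have key := (convex_convexHull 𝕜 (insert 0 s)).sum_mem (t := Finset.univ)
    (w := fun o : Option ι => o.elim (1 - ∑ i, t i) t) (z := fun o => o.elim 0 v)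
    (by rintro (_ | i) - <;> simp [ht, hsum])
    (by simp [Fintype.sum_option])
    (by rintro (_ | i) - <;> simp [subset_convexHull 𝕜 _ (Set.mem_insert _ _),
      subset_convexHull 𝕜 _ (Set.mem_insert_of_mem _ (hv _))])
  simpa [Fintype.sum_option] using key

end Simplex

section Alcove

variable {V ι : Type*} [NormedAddCommGroup V] [InnerProductSpace ℝ V]

theorem sum_inner_smul_eq_of_dual [Fintype ι] [DecidableEq ι] {α ω : ι → V}
    (hspan : Submodule.span ℝ (Set.range α) = ⊤)
    (hdual : ∀ i j, ⟪ω i, α j⟫ = if i = j then 1 else 0) (x : V) :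
    ∑ i, ⟪α i, x⟫ • ω i = x := by
  refine ext_inner_right ℝ fun v => LinearMap.congr_fun (?_ : innerₛₗ ℝ _ = innerₛₗ ℝ x) v
  refine LinearMap.ext_on_range hspan fun j => ?_
  simp [hdual, real_inner_comm x]

def dilatedAlcove (α : ι → V) (θ : V) (c : ℝ) : Set V :=
  {x | (∀ i, 0 ≤ ⟪α i, x⟫) ∧ ⟪θ, x⟫ ≤ c}

theorem convex_dilatedAlcove (α : ι → V) (θ : V) (c : ℝ) : Convex ℝ (dilatedAlcove α θ c) := by
  have hlin (v : V) : IsLinearMap ℝ (fun x => ⟪v, x⟫) :=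
    ⟨inner_add_right v, fun a x => real_inner_smul_right v x a⟩
  simp only [dilatedAlcove, Set.ofPred_and, Set.ofPred_forall]
  exact (convex_iInter fun i => convex_halfSpace_ge (hlin _) 0).inter
    (convex_halfSpace_le (hlin θ) c)

theorem dilatedAlcove_eq_convexHull [Fintype ι] [DecidableEq ι] {α ω : ι → V} {m : ι → ℝ}
    {θ : V} {c : ℝ} (hspan : Submodule.span ℝ (Set.range α) = ⊤)
    (hdual : ∀ i j, ⟪ω i, α j⟫ = if i = j then 1 else 0) (hθ : θ = ∑ i, m i • α i)
    (hm : ∀ i, 0 < m i) (hc : 0 < c) :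
    dilatedAlcove α θ c = convexHull ℝ (insert 0 (Set.range fun i => (c / m i) • ω i)) := by
  have hθx (x : V) : ⟪θ, x⟫ = ∑ i, m i * ⟪α i, x⟫ := by
    simp [hθ, sum_inner, real_inner_smul_left]
  refine subset_antisymm ?_ (convexHull_min ?_ (convex_dilatedAlcove α θ c))
  · rintro x ⟨hx₀, hxc⟩
    have hx : ∑ i, (m i * ⟪α i, x⟫ / c) • (c / m i) • ω i = x := by
      conv_rhs => rw [← sum_inner_smul_eq_of_dual hspan hdual x]
      refine Finset.sum_congr rfl fun i _ => ?_
      rw [smul_smul]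
      congr 1
      field_simp [(hm i).ne']
    rw [← hx]
    refine sum_smul_mem_convexHull_insert_zero (fun i => ?_) ?_ fun i => ⟨i, rfl⟩
    · have := hm i; have := hx₀ i; positivity
    · rwa [← Finset.sum_div, ← hθx, div_le_one hc]
  · rintro _ (rfl | ⟨i, rfl⟩)
    · simp [dilatedAlcove, hc.le]
    · refine ⟨fun j => ?_, ?_⟩
      · rw [real_inner_smul_right, real_inner_comm, hdual]
        have := hm i
        split_ifs <;> positivity
      · simp [hθx, real_inner_smul_right, real_inner_comm (ω i), hdual,
          mul_div_cancel₀ c (hm i).ne']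

theorem setOf_eq_image_const_sub_dilatedAlcove {α : ι → V} {θ ρ : V} {c : ℝ}
    (hαρ : ∀ i, ⟪α i, ρ⟫ = 1) (hθρ : ⟪θ, ρ⟫ + 2 = c) :
    {x : V | (∀ i, ⟪α i, x⟫ ≤ 1) ∧ -2 ≤ ⟪θ, x⟫} = (ρ - ·) '' dilatedAlcove α θ c := by
  rw [Set.image_eq_preimage_of_inverse (sub_sub_cancel ρ) (sub_sub_cancel ρ)]
  ext x
  simp only [Set.mem_ofPred_eq, Set.mem_preimage, dilatedAlcove, inner_sub_right, hαρ, sub_nonneg,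
    ← hθρ]
  exact and_congr Iff.rfl (by constructor <;> intro <;> linarith)

theorem image_dilatedAlcove_of_perm {α : ι → V} {θ : V} {c : ℝ} (L : V ≃ₗᵢ[ℝ] V)
    (σ : Equiv.Perm ι) (hLα : ∀ i, L (α i) = α (σ i)) (hLθ : L θ = θ) :
    L '' dilatedAlcove α θ c = dilatedAlcove α θ c := by
  suffices hpre : L ⁻¹' dilatedAlcove α θ c = dilatedAlcove α θ c by
    conv_lhs => rw [← hpre]
    exact Set.image_preimage_eq _ L.surjective
  ext x
  have hθx : ⟪θ, L x⟫ = ⟪θ, x⟫ := by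
    conv_lhs => rw [← hLθ]
    exact L.inner_map_map θ x
  simp only [Set.mem_preimage, dilatedAlcove, Set.mem_ofPred_eq, hθx,
    ← σ.forall_congr_right (q := fun j => 0 ≤ ⟪α j, L x⟫), ← hLα, L.inner_map_map]

end Alcove

theorem simplex_X_eq_translate_of_alcove_general {V : Type*} [NormedAddCommGroup V]
    [InnerProductSpace ℝ V] {n : ℕ}
    (α ω : Fin n → V) (m : Fin n → ℕ) (θ ρ : V) (h : ℕ)
    (w₀ : V ≃ₗᵢ[ℝ] V) (σ : Equiv.Perm (Fin n))
    (hspan : Submodule.span ℝ (Set.range α) = ⊤)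
    (hdual : ∀ i j, ⟪ω i, α j⟫ = if i = j then 1 else 0)
    (hθ : θ = ∑ i, (m i : ℝ) • α i) (hm : ∀ i, 0 < m i)
    (hh : h = 1 + ∑ i, m i)
    (hρ : ρ = ∑ i, ω i)
    (hw₀ : ∀ i, w₀ (α i) = - α (σ i)) (hw₀θ : w₀ θ = -θ) :
    {x : V | (∀ i, ⟪α i, x⟫ ≤ 1) ∧ -2 ≤ ⟪θ, x⟫}
      = convexHull ℝ (insert ρ (Set.range fun i => ρ - (((h : ℝ) + 1) / (m i : ℝ)) • ω i)) ∧
    {x : V | (∀ i, ⟪α i, x⟫ ≤ 1) ∧ -2 ≤ ⟪θ, x⟫}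
      = (fun x => ρ + w₀ x) '' {x : V | (∀ i, 0 ≤ ⟪α i, x⟫) ∧ ⟪θ, x⟫ ≤ (h : ℝ) + 1} := by
  have hαρ (j : Fin n) : ⟪α j, ρ⟫ = 1 := by
    rw [real_inner_comm, hρ, sum_inner]
    simp [hdual]
  have hθρ : ⟪θ, ρ⟫ + 2 = (h : ℝ) + 1 := by
    simp [hθ, sum_inner, real_inner_smul_left, hαρ, hh]
    ring
  have hX := setOf_eq_image_const_sub_dilatedAlcove hαρ hθρ
  refine ⟨?_, ?_⟩
  · rw [hX, dilatedAlcove_eq_convexHull hspan hdual hθ (fun i => by exact_mod_cast hm i)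
      (by positivity)]
    have hsub : (fun x => ρ - x) = ⇑(AffineMap.const ℝ V ρ - AffineMap.id ℝ V) := rfl
    rw [hsub, AffineMap.image_convexHull, Set.image_insert_eq, ← Set.range_comp]
    simp [Function.comp_def]
  · let L : V ≃ₗᵢ[ℝ] V := w₀.trans (LinearIsometryEquiv.neg ℝ)
    have hL : L '' dilatedAlcove α θ (h + 1) = dilatedAlcove α θ (h + 1) :=
      image_dilatedAlcove_of_perm L σ (fun i => by simp [L, hw₀]) (by simp [L, hw₀θ])
    rw [hX, ← hL, Set.image_image]
    congr 1
    simp [L, sub_eq_add_neg]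

/-- Let `α i` be the simple roots (a basis of `V`), `ω i` the fundamental coweights
(dual basis), `θ = ∑ m i • α i` the highest root, `h = 1 + ∑ m i` the Coxeter number,
`ρ̌ = ∑ ω i`, and `w₀` the longest element of the Weyl group (so `w₀` permutes the
negatives of the simple roots and `w₀ θ = -θ`).  Then
`X = {x | (x, α i) ≤ 1 ∀ i, (x, θ) ≥ -2}` is the simplex with vertices `ρ̌` and
`ρ̌ - (h+1)·ωᵢ/mᵢ` for `i = 1, …, n`, and `X = t_ρ̌ w₀ (C̄_{h+1})`, where
`C̄_{h+1} = {x | (x, α i) ≥ 0 ∀ i, (x, θ) ≤ h + 1}`. -/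
theorem simplex_X_eq_translate_of_alcove {V : Type*} [NormedAddCommGroup V]
    [InnerProductSpace ℝ V] [FiniteDimensional ℝ V] {n : ℕ}
    (α ω : Fin n → V) (m : Fin n → ℕ) (θ ρ : V) (h : ℕ)
    (w₀ : V ≃ₗᵢ[ℝ] V) (σ : Equiv.Perm (Fin n))
    (hind : LinearIndependent ℝ α)
    (hspan : Submodule.span ℝ (Set.range α) = ⊤)
    (hdual : ∀ i j, ⟪ω i, α j⟫ = if i = j then 1 else 0)
    (hθ : θ = ∑ i, (m i : ℝ) • α i) (hm : ∀ i, 0 < m i)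
    (hh : h = 1 + ∑ i, m i)
    (hρ : ρ = ∑ i, ω i)
    (hw₀ : ∀ i, w₀ (α i) = - α (σ i)) (hw₀θ : w₀ θ = -θ) :
    {x : V | (∀ i, ⟪α i, x⟫ ≤ 1) ∧ -2 ≤ ⟪θ, x⟫}
      = convexHull ℝ (insert ρ (Set.range fun i => ρ - (((h : ℝ) + 1) / (m i : ℝ)) • ω i)) ∧
    {x : V | (∀ i, ⟪α i, x⟫ ≤ 1) ∧ -2 ≤ ⟪θ, x⟫}
      = (fun x => ρ + w₀ x) '' {x : V | (∀ i, 0 ≤ ⟪α i, x⟫) ∧ ⟪θ, x⟫ ≤ (h : ℝ) + 1} :=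
  simplex_X_eq_translate_of_alcove_general α ω m θ ρ h w₀ σ hspan hdual hθ hm hh hρ hw₀ hw₀θ
end

section
/- In type $A_n$, realize $\Delta^+ = \{\varepsilon_i - \varepsilon_j \mid 1 \leq i < j \leq n+1\}$. A set partition of $\{1,\dots,n+1\}$ arises from an antichain $A$ of the root poset (by placing $i, j$ in the same block whenever $\varepsilon_i - \varepsilon_j \in A$, and taking the generated equivalence) if and only if it is nonnesting: whenever $a < b < d < e$ with $a, e$ consecutive elements of a block $B$ and $b, d$ consecutive elements of a different block $B'$, there exists $c \in B$ with $b < c < d$. Equivalently, the antichains of the type $A_n$ root poset are in bijection with nonnesting partitions of $\{1,\dots,n+1\}$. -/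
/-- Positive roots of type `Aₙ`: `ε_i - ε_j` for `i < j` in `{1, …, n+1}`. -/
def TypeARoot (n : ℕ) := {p : Fin (n + 1) × Fin (n + 1) // p.1 < p.2}

/-- The root poset order of type `Aₙ`: `ε_i - ε_j ≤ ε_k - ε_l` iff `k ≤ i` and
`j ≤ l`. -/
def rootLe {n : ℕ} (p q : TypeARoot n) : Prop :=
  q.1.1 ≤ p.1.1 ∧ p.1.2 ≤ q.1.2

/-- `A` is an antichain of the type `Aₙ` root poset. -/
def IsRootAntichain {n : ℕ} (A : Set (TypeARoot n)) : Prop :=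
  A.Pairwise fun p q => ¬ rootLe p q ∧ ¬ rootLe q p

/-- The set partition of `{1, …, n+1}` associated to a set `A` of positive roots:
the equivalence relation generated by putting `i, j` in the same block whenever
`ε_i - ε_j ∈ A`. -/
def partitionOf {n : ℕ} (A : Set (TypeARoot n)) : Setoid (Fin (n + 1)) :=
  Relation.EqvGen.setoid fun i j => ∃ p ∈ A, (p.1.1 = i ∧ p.1.2 = j) ∨ (p.1.1 = j ∧ p.1.2 = i)

/-- A set partition of `{1, …, n+1}` is nonnesting if whenever `a < b < d < e` with
`a, e` consecutive elements of a block `B` and `b, d` consecutive elements of a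
different block `B'`, there exists `c ∈ B` with `b < c < d`. -/
def IsNonnesting {n : ℕ} (s : Setoid (Fin (n + 1))) : Prop :=
  ∀ a b d e : Fin (n + 1), a < b → b < d → d < e →
    s.r a e → (¬ ∃ c, a < c ∧ c < e ∧ s.r a c) →
    s.r b d → (¬ ∃ c, b < c ∧ c < d ∧ s.r b c) →
    ¬ s.r a b →
    ∃ c, s.r a c ∧ b < c ∧ c < d

namespace NN

variable {n : ℕ}

/-- The generating relation of `partitionOf A`. -/
def R (A : Set (TypeARoot n)) (i j : Fin (n + 1)) : Prop :=
  ∃ p ∈ A, (p.1.1 = i ∧ p.1.2 = j) ∨ (p.1.1 = j ∧ p.1.2 = i)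

lemma partitionOf_r (A : Set (TypeARoot n)) (i j : Fin (n + 1)) :
    (partitionOf A).r i j ↔ Relation.EqvGen (R A) i j := Iff.rfl

/-- The directed edge relation: there is a root `ε_i - ε_j` in `A`. -/
def E (A : Set (TypeARoot n)) (i j : Fin (n + 1)) : Prop :=
  ∃ p ∈ A, p.1.1 = i ∧ p.1.2 = j

lemma E_lt {A : Set (TypeARoot n)} {i j : Fin (n + 1)} (h : E A i j) : i < j := by
  obtain ⟨p, _, h1, h2⟩ := h
  rw [← h1, ← h2]; exact p.2

lemma succ_unique {A : Set (TypeARoot n)} (hA : IsRootAntichain A)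
    {i j j' : Fin (n + 1)} (h : E A i j) (h' : E A i j') : j = j' := by
  obtain ⟨p, hp, hp1, hp2⟩ := h
  obtain ⟨q, hq, hq1, hq2⟩ := h'
  by_contra hne
  have hpq : p ≠ q := by
    intro h; apply hne; rw [← hp2, ← hq2, h]
  obtain ⟨h1, h2⟩ := hA hp hq hpq
  rw [rootLe, hp1, hp2, hq1, hq2] at h1 h2
  rcases le_total j j' with h | h
  · exact h1 ⟨le_refl i, h⟩
  · exact h2 ⟨le_refl i, h⟩

lemma pred_unique {A : Set (TypeARoot n)} (hA : IsRootAntichain A)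
    {i i' j : Fin (n + 1)} (h : E A i j) (h' : E A i' j) : i = i' := by
  obtain ⟨p, hp, hp1, hp2⟩ := h
  obtain ⟨q, hq, hq1, hq2⟩ := h'
  by_contra hne
  have hpq : p ≠ q := by
    intro h; apply hne; rw [← hp1, ← hq1, h]
  obtain ⟨h1, h2⟩ := hA hp hq hpq
  rw [rootLe, hp1, hp2, hq1, hq2] at h1 h2
  rcases le_total i i' with h | h
  · exact h2 ⟨h, le_refl j⟩
  · exact h1 ⟨h, le_refl j⟩

lemma rtg_le {A : Set (TypeARoot n)} {i j : Fin (n + 1)}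
    (h : Relation.ReflTransGen (E A) i j) : i ≤ j := by
  induction h with
  | refl => exact le_refl i
  | tail _ h ih => exact le_trans ih (le_of_lt (E_lt h))

/-- Two chains into the same vertex are comparable. -/
lemma into_comparable {A : Set (TypeARoot n)} (hA : IsRootAntichain A)
    {i j k : Fin (n + 1)} (h1 : Relation.ReflTransGen (E A) i j)
    (h2 : Relation.ReflTransGen (E A) k j) :
    Relation.ReflTransGen (E A) i k ∨ Relation.ReflTransGen (E A) k i := by
  induction h2 using Relation.ReflTransGen.head_induction_on with
  | refl => exact Or.inl h1
  | head hvw _ ih =>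
    rename_i v w
    rcases ih with h | h
    · rcases Relation.ReflTransGen.cases_tail h with rfl | ⟨u, hiu, huw⟩
      · exact Or.inr (Relation.ReflTransGen.single hvw)
      · rw [pred_unique hA huw hvw] at hiu
        exact Or.inl hiu
    · exact Or.inr (Relation.ReflTransGen.head hvw h)

/-- Two chains out of the same vertex are comparable. -/
lemma outof_comparable {A : Set (TypeARoot n)} (hA : IsRootAntichain A)
    {i j k : Fin (n + 1)} (h1 : Relation.ReflTransGen (E A) j i)
    (h2 : Relation.ReflTransGen (E A) j k) :
    Relation.ReflTransGen (E A) i k ∨ Relation.ReflTransGen (E A) k i := by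
  induction h2 with
  | refl => exact Or.inr h1
  | tail hk₀ hk₀k ih =>
    rename_i k₀ k
    rcases ih with h | h
    · exact Or.inl (Relation.ReflTransGen.tail h hk₀k)
    · rcases Relation.ReflTransGen.cases_head h with rfl | ⟨u, hk₀u, hui⟩
      · exact Or.inl (Relation.ReflTransGen.single hk₀k)
      · rw [succ_unique hA hk₀u hk₀k] at hui
        exact Or.inr hui

/-- For an antichain, the generated equivalence is: connected by a monotone chain. -/
lemma eqvGen_iff {A : Set (TypeARoot n)} (hA : IsRootAntichain A) {i j : Fin (n + 1)} :
    Relation.EqvGen (R A) i j ↔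
      Relation.ReflTransGen (E A) i j ∨ Relation.ReflTransGen (E A) j i := by
  constructor
  · intro h
    induction h with
    | rel x y hxy =>
      obtain ⟨p, hp, hcase⟩ := hxy
      rcases hcase with ⟨h1, h2⟩ | ⟨h1, h2⟩
      · exact Or.inl (Relation.ReflTransGen.single ⟨p, hp, h1, h2⟩)
      · exact Or.inr (Relation.ReflTransGen.single ⟨p, hp, h1, h2⟩)
    | refl x => exact Or.inl Relation.ReflTransGen.refl
    | symm x y _ ih => exact ih.symm
    | trans x y z _ _ ih1 ih2 =>
      rcases ih1 with h1 | h1 <;> rcases ih2 with h2 | h2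
      · exact Or.inl (h1.trans h2)
      · exact into_comparable hA h1 h2
      · exact outof_comparable hA h1 h2
      · exact Or.inr (h2.trans h1)
  · intro h
    have key : ∀ a b : Fin (n + 1), Relation.ReflTransGen (E A) a b →
        Relation.EqvGen (R A) a b := by
      intro a b hab
      induction hab with
      | refl => exact Relation.EqvGen.refl a
      | tail _ h ih =>
        rename_i c d
        obtain ⟨p, hp, h1, h2⟩ := h
        exact Relation.EqvGen.trans _ _ _ ih
          (Relation.EqvGen.rel _ _ ⟨p, hp, Or.inl ⟨h1, h2⟩⟩)
    rcases h with h | h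
    · exact key _ _ h
    · exact Relation.EqvGen.symm _ _ (key _ _ h)

/-- `i, j` are consecutive elements of a block of `s`. -/
def Cons (s : Setoid (Fin (n + 1))) (i j : Fin (n + 1)) : Prop :=
  i < j ∧ s.r i j ∧ ¬ ∃ c, i < c ∧ c < j ∧ s.r i c

/-- The canonical set of roots attached to a partition: the consecutive pairs. -/
def consSet (s : Setoid (Fin (n + 1))) : Set (TypeARoot n) :=
  {p | Cons s p.1.1 p.1.2}

/-- For an antichain `A`, membership in `A` is exactly being a consecutive pair of
`partitionOf A`. -/
lemma mem_iff_cons {A : Set (TypeARoot n)} (hA : IsRootAntichain A) (p : TypeARoot n) :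
    p ∈ A ↔ Cons (partitionOf A) p.1.1 p.1.2 := by
  constructor
  · intro hp
    have hEij : E A p.1.1 p.1.2 := ⟨p, hp, rfl, rfl⟩
    refine ⟨p.2, Relation.EqvGen.rel _ _ ⟨p, hp, Or.inl ⟨rfl, rfl⟩⟩, ?_⟩
    rintro ⟨c, hic, hcj, hrc⟩
    rw [partitionOf_r, eqvGen_iff hA] at hrc
    rcases hrc with h | h
    · rcases Relation.ReflTransGen.cases_head h with rfl | ⟨w, hiw, hwc⟩
      · exact lt_irrefl _ hic
      · rw [succ_unique hA hiw hEij] at hwc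
        exact absurd (rtg_le hwc) (not_le.mpr hcj)
    · exact absurd (rtg_le h) (not_le.mpr hic)
  · rintro ⟨hlt, hr, hnoc⟩
    rw [partitionOf_r, eqvGen_iff hA] at hr
    rcases hr with h | h
    · rcases Relation.ReflTransGen.cases_head h with heq | ⟨w, hiw, hwj⟩
      · exact absurd heq (ne_of_lt hlt)
      · have hwle : w ≤ p.1.2 := rtg_le hwj
        have hiw' : p.1.1 < w := E_lt hiw
        rcases lt_or_eq_of_le hwle with hwlt | heqw
        · exfalso
          apply hnoc
          obtain ⟨q, hq, h1, h2⟩ := hiw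
          exact ⟨w, hiw', hwlt, Relation.EqvGen.rel _ _ ⟨q, hq, Or.inl ⟨h1, h2⟩⟩⟩
        · obtain ⟨q, hq, h1, h2⟩ := hiw
          have hq1 : q = p := by
            apply Subtype.ext
            apply Prod.ext
            · exact h1
            · rw [h2, heqw]
          rwa [hq1] at hq
    · exact absurd (rtg_le h) (not_le.mpr hlt)

/-- Distinct consecutive pairs of a nonnesting partition are never nested. -/
lemma cons_nested {s : Setoid (Fin (n + 1))} (hs : IsNonnesting s)
    {a b d e : Fin (n + 1)} (h1 : Cons s a e) (h2 : Cons s b d)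
    (hab : a ≤ b) (hde : d ≤ e) : a = b ∧ e = d := by
  obtain ⟨hae, hrae, hnae⟩ := h1
  obtain ⟨hbd, hrbd, hnbd⟩ := h2
  rcases lt_or_eq_of_le hab with hab' | rfl
  · exfalso
    have hnab : ¬ s.r a b := by
      intro h
      exact hnae ⟨b, hab', lt_of_lt_of_le hbd hde, h⟩
    rcases lt_or_eq_of_le hde with hde' | rfl
    · obtain ⟨c, hrc, hbc, hcd⟩ := hs a b d e hab' hbd hde' hrae hnae hrbd hnbd hnab
      exact hnae ⟨c, lt_trans hab' hbc, lt_trans hcd hde', hrc⟩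
    · exact hnab (s.iseqv.trans hrae (s.iseqv.symm hrbd))
  · refine ⟨rfl, ?_⟩
    rcases lt_or_eq_of_le hde with hde' | rfl
    · exact absurd ⟨d, hbd, hde', hrbd⟩ hnae
    · rfl

/-- The consecutive pairs of a nonnesting partition form an antichain. -/
lemma consSet_antichain {s : Setoid (Fin (n + 1))} (hs : IsNonnesting s) :
    IsRootAntichain (consSet s) := by
  intro p hp q hq hne
  constructor
  · rintro ⟨h1, h2⟩
    obtain ⟨ha, hb⟩ := cons_nested hs hq hp h1 h2
    exact hne (Subtype.ext (Prod.ext ha.symm hb.symm))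
  · rintro ⟨h1, h2⟩
    obtain ⟨ha, hb⟩ := cons_nested hs hp hq h1 h2
    exact hne (Subtype.ext (Prod.ext ha hb))

/-- Any related pair is connected by a chain of consecutive pairs. -/
lemma reach (s : Setoid (Fin (n + 1))) :
    ∀ k : ℕ, ∀ i j : Fin (n + 1), j.val - i.val ≤ k → i < j → s.r i j →
      Relation.EqvGen (R (consSet s)) i j := by
  intro k
  induction k with
  | zero =>
    intro i j hk hij _
    exfalso
    have h1 : (i : ℕ) < (j : ℕ) := hij
    omega
  | succ k ih =>
    intro i j hk hij hr
    classical
    set T : Finset (Fin (n + 1)) :=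
      Finset.univ.filter (fun c => i < c ∧ c ≤ j ∧ s.r i c) with hT
    have hjT : j ∈ T := by simp [hT, hij, hr]
    have hne : T.Nonempty := ⟨j, hjT⟩
    have hcT : T.min' hne ∈ T := T.min'_mem hne
    generalize hc : T.min' hne = c at *
    simp only [hT, Finset.mem_filter, Finset.mem_univ, true_and] at hcT
    obtain ⟨hic, hcj, hric⟩ := hcT
    have hcons : Cons s i c := by
      refine ⟨hic, hric, ?_⟩
      rintro ⟨c', hic', hc'c, hric'⟩
      have : c' ∈ T := by
        simp [hT, hic', le_of_lt (lt_of_lt_of_le hc'c hcj), hric']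
      exact absurd (hc ▸ T.min'_le c' this) (not_le.mpr hc'c)
    have hstep : Relation.EqvGen (R (consSet s)) i c :=
      Relation.EqvGen.rel _ _ ⟨⟨(i, c), hic⟩, hcons, Or.inl ⟨rfl, rfl⟩⟩
    rcases lt_or_eq_of_le hcj with hcj' | rfl
    · have hrcj : s.r c j := s.iseqv.trans (s.iseqv.symm hric) hr
      have : j.val - c.val ≤ k := by
        have h1 : i.val < c.val := hic
        have h2 : j.val - i.val ≤ k + 1 := hk
        omega
      exact Relation.EqvGen.trans _ _ _ hstep (ih c j this hcj' hrcj)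
    · exact hstep

/-- `partitionOf (consSet s) = s`. -/
lemma partitionOf_consSet (s : Setoid (Fin (n + 1))) : partitionOf (consSet s) = s := by
  apply Setoid.ext
  intro i j
  constructor
  · intro h
    have h' : Relation.EqvGen (R (consSet s)) i j := h
    clear h
    induction h' with
    | rel x y hxy =>
      obtain ⟨p, hp, hcase⟩ := hxy
      obtain ⟨_, hr, _⟩ := hp
      rcases hcase with ⟨h1, h2⟩ | ⟨h1, h2⟩
      · rw [← h1, ← h2]; exact hr
      · rw [← h1, ← h2]; exact s.iseqv.symm hr
    | refl x => exact s.iseqv.refl x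
    | symm x y _ ih => exact s.iseqv.symm ih
    | trans x y z _ _ ih1 ih2 => exact s.iseqv.trans ih1 ih2
  · intro h
    rcases lt_trichotomy i j with hij | rfl | hij
    · exact reach s (j.val - i.val) i j (le_refl _) hij h
    · exact Relation.EqvGen.refl i
    · exact Relation.EqvGen.symm _ _
        (reach s (i.val - j.val) j i (le_refl _) hij (s.iseqv.symm h))

/-- For an antichain `A`, `consSet (partitionOf A) = A`. -/
lemma consSet_partitionOf {A : Set (TypeARoot n)} (hA : IsRootAntichain A) :
    consSet (partitionOf A) = A := by
  ext p
  exact (mem_iff_cons hA p).symm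

/-- `partitionOf A` is nonnesting when `A` is an antichain. -/
lemma nonnesting_of_antichain {A : Set (TypeARoot n)} (hA : IsRootAntichain A) :
    IsNonnesting (partitionOf A) := by
  intro a b d e hab hbd hde hrae hnae hrbd hnbd hnab
  exfalso
  have hae : a < e := lt_trans (lt_trans hab hbd) hde
  have hp : (⟨(a, e), hae⟩ : TypeARoot n) ∈ A :=
    (mem_iff_cons hA _).mpr ⟨hae, hrae, hnae⟩
  have hq : (⟨(b, d), hbd⟩ : TypeARoot n) ∈ A :=
    (mem_iff_cons hA _).mpr ⟨hbd, hrbd, hnbd⟩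
  have hne : (⟨(a, e), hae⟩ : TypeARoot n) ≠ ⟨(b, d), hbd⟩ := by
    intro h
    have : a = b := congrArg (fun x => x.1.1) h
    exact absurd this (ne_of_lt hab)
  obtain ⟨_, h2⟩ := hA hp hq hne
  exact h2 ⟨le_of_lt hab, le_of_lt hde⟩

end NN

/-- A set partition of `{1, …, n+1}` arises from an antichain of the type `Aₙ` root
poset if and only if it is nonnesting; moreover the antichains of the root poset are in
bijection with the nonnesting partitions, via `A ↦ partitionOf A`. -/
theorem antichains_equiv_nonnesting_partitions (n : ℕ) :
    (∀ s : Setoid (Fin (n + 1)),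
      (∃ A : Set (TypeARoot n), IsRootAntichain A ∧ s = partitionOf A) ↔ IsNonnesting s) ∧
    ∃ e : {A : Set (TypeARoot n) // IsRootAntichain A} ≃
        {s : Setoid (Fin (n + 1)) // IsNonnesting s},
      ∀ A, (e A : Setoid (Fin (n + 1))) = partitionOf (A : Set (TypeARoot n)) := by
  constructor
  · intro s
    constructor
    · rintro ⟨A, hA, rfl⟩
      exact NN.nonnesting_of_antichain hA
    · intro hs
      exact ⟨NN.consSet s, NN.consSet_antichain hs, (NN.partitionOf_consSet s).symm⟩
  · refine ⟨⟨fun A => ⟨partitionOf A.1, NN.nonnesting_of_antichain A.2⟩,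
      fun s => ⟨NN.consSet s.1, NN.consSet_antichain s.2⟩,
      fun A => Subtype.ext (NN.consSet_partitionOf A.2),
      fun s => Subtype.ext (NN.partitionOf_consSet s.1)⟩, fun A => rfl⟩
end
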